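/- arXiv:1309.3837 — 5 statements merged into one kernel-verified Lean document; each statement's English description precedes it below -/
import Mathlib

section
/- Let α ∈ [0, π/2], and set t₁ = t₂ = arccos(1/(sin(α/2) + cos(α/2))) and δt = arccos(cos(α/2) - sin(α/2)). Then exp(α Ωx) = exp(t₂ Ωz) * exp(-δt Ωy) * exp(-δt Ωz) * exp(t₁ Ωy). -/
open Real Matrix

noncomputable section

def Ox : Matrix (Fin 3) (Fin 3) ℝ := !![0,0,0; 0,0,-1; 0,1,0]
def Oy : Matrix (Fin 3) (Fin 3) ℝ := !![0,0,1; 0,0,0; -1,0,0]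
def Oz : Matrix (Fin 3) (Fin 3) ℝ := !![0,-1,0; 1,0,0; 0,0,0]

/-!
Every generator `Ω` satisfies `Ω³ = -Ω`, so splitting the exponential series into even and odd
terms gives Rodrigues' formula `exp (θ • Ω) = 1 + sin θ • Ω + (1 - cos θ) • Ω²`, i.e. the usual
rotation matrices. With `u = sin (α/2)`, `v = cos (α/2)` and `w = √(2uv)` one has
`cos t = 1/(u+v)`, `sin t = w/(u+v)`, `cos δt = v - u`, `sin δt = w`, and the claim becomes a
polynomial identity in `u, v, w` modulo `u² + v² = 1` and `w² = 2uv`.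
-/

open scoped Nat

section Rodrigues

variable {𝔸 : Type*} [Ring 𝔸] [Algebra ℝ 𝔸] {A : 𝔸}

lemma pow_two_mul_add_one_of_pow_three_eq_neg (h : A ^ 3 = -A) (n : ℕ) :
    A ^ (2 * n + 1) = ((-1 : ℝ) ^ n) • A := by
  induction n with
  | zero => simp
  | succ k ih =>
    rw [show 2 * (k + 1) + 1 = 2 * k + 1 + 2 by ring, pow_add, ih, smul_mul_assoc,
      ← pow_succ', h, pow_succ, smul_neg, mul_neg_one, neg_smul]

lemma pow_two_mul_add_two_of_pow_three_eq_neg (h : A ^ 3 = -A) (n : ℕ) :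
    A ^ (2 * n + 2) = ((-1 : ℝ) ^ n) • A ^ 2 := by
  rw [pow_succ, pow_two_mul_add_one_of_pow_three_eq_neg h, smul_mul_assoc, ← pow_two]

variable [TopologicalSpace 𝔸] [ContinuousSMul ℝ 𝔸]

lemma hasSum_odd_exp_series_of_pow_three_eq_neg (h : A ^ 3 = -A) (θ : ℝ) :
    HasSum (fun n : ℕ => (((2 * n + 1)! : ℝ)⁻¹) • (θ • A) ^ (2 * n + 1)) (sin θ • A) := by
  convert (hasSum_sin θ).smul_const A using 2 with n
  rw [smul_pow, pow_two_mul_add_one_of_pow_three_eq_neg h, smul_smul, smul_smul]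
  ring_nf

lemma hasSum_even_exp_series_of_pow_three_eq_neg [IsTopologicalAddGroup 𝔸] (h : A ^ 3 = -A)
    (θ : ℝ) :
    HasSum (fun n : ℕ => (((2 * n)! : ℝ)⁻¹) • (θ • A) ^ (2 * n))
      ((1 - cos θ) • A ^ 2 + 1) := by
  have hcos_tail : HasSum (fun n : ℕ => (-1 : ℝ) ^ (n + 1) * θ ^ (2 * (n + 1)) /
      ((2 * (n + 1))! : ℝ)) (cos θ - 1) := by
    rw [hasSum_nat_add_iff (f := fun n : ℕ => (-1 : ℝ) ^ n * θ ^ (2 * n) / ((2 * n)! : ℝ)) 1]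
    simpa using hasSum_cos θ
  have htail : HasSum (fun n : ℕ => (((2 * (n + 1))! : ℝ)⁻¹) • (θ • A) ^ (2 * (n + 1)))
      ((1 - cos θ) • A ^ 2) := by
    convert hcos_tail.neg.smul_const (A ^ 2) using 2 with n
    · rw [mul_add_one, smul_pow, pow_two_mul_add_two_of_pow_three_eq_neg h, smul_smul,
        smul_smul, ← mul_add_one]
      ring_nf
    · rw [neg_sub]
  simpa using (hasSum_nat_add_iff
    (f := fun n : ℕ => (((2 * n)! : ℝ)⁻¹) • (θ • A) ^ (2 * n)) 1).mp htail

theorem exp_smul_of_pow_three_eq_neg [IsTopologicalRing 𝔸] [T2Space 𝔸] (h : A ^ 3 = -A)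
    (θ : ℝ) :
    NormedSpace.exp (θ • A) = 1 + sin θ • A + (1 - cos θ) • A ^ 2 := by
  rw [NormedSpace.exp_eq_tsum (𝕂 := ℝ), add_right_comm, add_comm 1]
  exact (HasSum.even_add_odd (f := fun n : ℕ => ((n ! : ℝ)⁻¹) • (θ • A) ^ n)
    (hasSum_even_exp_series_of_pow_three_eq_neg h θ)
    (hasSum_odd_exp_series_of_pow_three_eq_neg h θ)).tsum_eq

end Rodrigues

def rotX (c s : ℝ) : Matrix (Fin 3) (Fin 3) ℝ := !![1,0,0; 0,c,-s; 0,s,c]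
def rotY (c s : ℝ) : Matrix (Fin 3) (Fin 3) ℝ := !![c,0,s; 0,1,0; -s,0,c]
def rotZ (c s : ℝ) : Matrix (Fin 3) (Fin 3) ℝ := !![c,-s,0; s,c,0; 0,0,1]

lemma Ox_sq : Ox ^ 2 = !![0,0,0; 0,-1,0; 0,0,-1] := by
  rw [sq, Ox, mul_fin_three]; norm_num

lemma Oy_sq : Oy ^ 2 = !![-1,0,0; 0,0,0; 0,0,-1] := by
  rw [sq, Oy, mul_fin_three]; norm_num

lemma Oz_sq : Oz ^ 2 = !![-1,0,0; 0,-1,0; 0,0,0] := by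
  rw [sq, Oz, mul_fin_three]; norm_num

lemma Ox_pow_three : Ox ^ 3 = -Ox := by
  rw [pow_succ, Ox_sq, Ox, mul_fin_three]; norm_num

lemma Oy_pow_three : Oy ^ 3 = -Oy := by
  rw [pow_succ, Oy_sq, Oy, mul_fin_three]; norm_num

lemma Oz_pow_three : Oz ^ 3 = -Oz := by
  rw [pow_succ, Oz_sq, Oz, mul_fin_three]; norm_num

lemma exp_smul_Ox (θ : ℝ) : NormedSpace.exp (θ • Ox) = rotX (cos θ) (sin θ) := by
  rw [exp_smul_of_pow_three_eq_neg Ox_pow_three, Ox_sq, Ox, rotX]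
  ext i j; fin_cases i <;> fin_cases j <;> simp

lemma exp_smul_Oy (θ : ℝ) : NormedSpace.exp (θ • Oy) = rotY (cos θ) (sin θ) := by
  rw [exp_smul_of_pow_three_eq_neg Oy_pow_three, Oy_sq, Oy, rotY]
  ext i j; fin_cases i <;> fin_cases j <;> simp

lemma exp_smul_Oz (θ : ℝ) : NormedSpace.exp (θ • Oz) = rotZ (cos θ) (sin θ) := by
  rw [exp_smul_of_pow_three_eq_neg Oz_pow_three, Oz_sq, Oz, rotZ]
  ext i j; fin_cases i <;> fin_cases j <;> simp

lemma rotX_eq_rotZ_mul_rotY_mul_rotZ_mul_rotY {u v w : ℝ} (huv : u ^ 2 + v ^ 2 = 1)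
    (hw : w ^ 2 = 2 * u * v) (hp : u + v ≠ 0) :
    rotX (v ^ 2 - u ^ 2) (2 * u * v) =
      rotZ (1 / (u + v)) (w / (u + v)) * rotY (v - u) (-w) * rotZ (v - u) (-w) *
        rotY (1 / (u + v)) (w / (u + v)) := by
  rw [rotX, rotY, rotZ, rotY, rotZ, mul_fin_three, mul_fin_three, mul_fin_three]
  ext i j
  fin_cases i <;> fin_cases j <;> simp <;> field_simp <;> grind

section UnitCircle

variable {u v : ℝ} (huv : u ^ 2 + v ^ 2 = 1)
include huv

lemma one_le_add_of_sq_add_sq_eq_one (hu : 0 ≤ u) (hv : 0 ≤ v) : 1 ≤ u + v := by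
  nlinarith [mul_nonneg hu hv]

lemma cos_arccos_one_div_add (hu : 0 ≤ u) (hv : 0 ≤ v) :
    cos (arccos (1 / (u + v))) = 1 / (u + v) := by
  have h := one_le_add_of_sq_add_sq_eq_one huv hu hv
  exact cos_arccos (neg_one_lt_zero.le.trans (one_div_nonneg.mpr (by linarith)))
    (div_le_one_of_le₀ h (by linarith))

lemma sin_arccos_one_div_add (hu : 0 ≤ u) (hv : 0 ≤ v) :
    sin (arccos (1 / (u + v))) = √(2 * u * v) / (u + v) := by
  have h := one_le_add_of_sq_add_sq_eq_one huv hu hv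
  rw [sin_arccos, show 1 - (1 / (u + v)) ^ 2 = 2 * u * v / (u + v) ^ 2 by
    field_simp; linear_combination huv, sqrt_div' _ (by positivity), sqrt_sq (by linarith)]

lemma cos_arccos_sub (hu : 0 ≤ u) (hv : 0 ≤ v) : cos (arccos (v - u)) = v - u :=
  cos_arccos (by nlinarith [mul_nonneg hu hv]) (by nlinarith [mul_nonneg hu hv])

lemma sin_arccos_sub : sin (arccos (v - u)) = √(2 * u * v) := by
  rw [sin_arccos]
  congr 1
  linear_combination -huv

end UnitCircle

theorem stmt_4 (α t₁ t₂ δt : ℝ) (hα : α ∈ Set.Icc 0 (π / 2))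
    (ht₁ : t₁ = Real.arccos (1 / (Real.sin (α / 2) + Real.cos (α / 2))))
    (ht₂ : t₂ = Real.arccos (1 / (Real.sin (α / 2) + Real.cos (α / 2))))
    (hδt : δt = Real.arccos (Real.cos (α / 2) - Real.sin (α / 2))) :
    NormedSpace.exp (α • Ox) =
      NormedSpace.exp (t₂ • Oz) * NormedSpace.exp ((-δt) • Oy) *
        NormedSpace.exp ((-δt) • Oz) * NormedSpace.exp (t₁ • Oy) := by
  subst ht₁ ht₂ hδt
  obtain ⟨hα₀, hα₁⟩ := hα
  have hu : 0 ≤ sin (α / 2) := sin_nonneg_of_mem_Icc ⟨by linarith, by linarith [pi_pos]⟩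
  have hv : 0 ≤ cos (α / 2) := cos_nonneg_of_mem_Icc ⟨by linarith [pi_pos], by linarith⟩
  have huv := sin_sq_add_cos_sq (α / 2)
  have hcos : cos α = cos (α / 2) ^ 2 - sin (α / 2) ^ 2 := by
    rw [← cos_two_mul', mul_div_cancel₀ _ two_ne_zero]
  have hsin : sin α = 2 * sin (α / 2) * cos (α / 2) := by
    rw [← sin_two_mul, mul_div_cancel₀ _ two_ne_zero]
  rw [exp_smul_Ox, exp_smul_Oy, exp_smul_Oy, exp_smul_Oz, exp_smul_Oz, cos_neg, sin_neg,
    hcos, hsin, cos_arccos_one_div_add huv hu hv, sin_arccos_one_div_add huv hu hv,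
    cos_arccos_sub huv hu hv, sin_arccos_sub huv]
  exact rotX_eq_rotZ_mul_rotY_mul_rotZ_mul_rotY huv (sq_sqrt (by positivity))
    (by linarith [one_le_add_of_sq_add_sq_eq_one huv hu hv])
end
end

section
/- Define f(α) = 2·(arccos(1/(sin(α/2)+cos(α/2))) + arccos(cos(α/2)-sin(α/2))) for α ∈ [0, π/2]. Then f(α) ≤ π + α, with strict inequality for α ∈ (0, π/2). -/
open Real

noncomputable def f (α : ℝ) : ℝ :=
  2 * (Real.arccos (1 / (Real.sin (α / 2) + Real.cos (α / 2))) +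
    Real.arccos (Real.cos (α / 2) - Real.sin (α / 2)))

/-! With `t = α / 2`, `s = sin t` and `c = cos t`, both arccos arguments `1 / (s + c)` and `c - s`
lie in `[0, 1]`, so the sum of the two arccosines lies in `[0, π]` and can be compared with
`π / 2 + t = arccos (-s)` through its cosine, which works out to `-s + (c - s)(1 - s) / (s + c)`.
The correction term vanishes only at `s = c`, i.e. `α = π / 2`. -/

namespace Real

lemma arccos_cos_arccos_add_arccos {x y : ℝ} (hx : 0 ≤ x) (hy : 0 ≤ y) :
    arccos (cos (arccos x + arccos y)) = arccos x + arccos y :=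
  arccos_cos (add_nonneg (arccos_nonneg x) (arccos_nonneg y))
    (by linarith [arccos_le_pi_div_two.2 hx, arccos_le_pi_div_two.2 hy])

lemma arccos_add_arccos_le_arccos {x y z : ℝ} (hx : 0 ≤ x) (hy : 0 ≤ y)
    (h : z ≤ cos (arccos x + arccos y)) : arccos x + arccos y ≤ arccos z := by
  rw [← arccos_cos_arccos_add_arccos hx hy]
  exact arccos_le_arccos h

lemma arccos_add_arccos_lt_arccos {x y z : ℝ} (hx : 0 ≤ x) (hy : 0 ≤ y) (hz : -1 ≤ z)
    (h : z < cos (arccos x + arccos y)) : arccos x + arccos y < arccos z := by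
  rw [← arccos_cos_arccos_add_arccos hx hy]
  exact arccos_lt_arccos hz h (cos_le_one _)

lemma arccos_neg_sin {t : ℝ} (h₁ : -(π / 2) ≤ t) (h₂ : t ≤ π / 2) :
    arccos (-sin t) = π / 2 + t := by
  rw [arccos_neg, arccos_eq_pi_div_two_sub_arcsin, arcsin_sin h₁ h₂]
  ring

lemma sin_le_cos_of_le_pi_div_four {t : ℝ} (h₀ : 0 ≤ t) (h₁ : t ≤ π / 4) :
    sin t ≤ cos t := by
  rw [← sin_pi_div_two_sub]
  exact strictMonoOn_sin.monotoneOn ⟨by linarith, by linarith⟩ ⟨by linarith, by linarith⟩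
    (by linarith)

lemma sin_lt_cos_of_lt_pi_div_four {t : ℝ} (h₀ : 0 ≤ t) (h₁ : t < π / 4) :
    sin t < cos t := by
  rw [← sin_pi_div_two_sub]
  exact strictMonoOn_sin ⟨by linarith, by linarith⟩ ⟨by linarith, by linarith⟩ (by linarith)

end Real

lemma cos_arccos_inv_add_add_arccos_sub {s c : ℝ} (hsc : s ^ 2 + c ^ 2 = 1) (hs : 0 ≤ s)
    (hc : 0 ≤ c) :
    cos (arccos (1 / (s + c)) + arccos (c - s)) = -s + (c - s) * (1 - s) / (s + c) := by
  have hsum : 1 ≤ s + c := by nlinarith [mul_nonneg hs hc]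
  have hx : 1 - (1 / (s + c)) ^ 2 = 2 * s * c / (s + c) ^ 2 := by
    field_simp
    linear_combination hsc
  have hy : 1 - (c - s) ^ 2 = 2 * s * c := by linear_combination -hsc
  have hx₁ : 1 / (s + c) ≤ 1 := by rw [div_le_one (by linarith)]; exact hsum
  rw [cos_add, cos_arccos (by linarith [one_div_pos.2 (by linarith : 0 < s + c)]) hx₁,
    cos_arccos (by nlinarith) (by nlinarith), sin_arccos, sin_arccos, hx, hy,
    sqrt_div' _ (sq_nonneg _), sqrt_sq (by linarith)]
  have hr : √(2 * s * c) ^ 2 = 2 * s * c := sq_sqrt (by positivity)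
  generalize √(2 * s * c) = r at hr ⊢
  field_simp
  linear_combination -hr

section

variable {t : ℝ}

lemma arccos_inv_sin_add_cos_add_arccos_cos_sub_sin_le (h₀ : 0 ≤ t) (h₁ : t ≤ π / 4) :
    arccos (1 / (sin t + cos t)) + arccos (cos t - sin t) ≤ π / 2 + t := by
  have hs : 0 ≤ sin t := sin_nonneg_of_nonneg_of_le_pi h₀ (by linarith [pi_pos])
  have hc : 0 ≤ cos t :=
    cos_nonneg_of_neg_pi_div_two_le_of_le (by linarith [pi_pos]) (by linarith)
  have hsc : sin t ≤ cos t := sin_le_cos_of_le_pi_div_four h₀ h₁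
  rw [← arccos_neg_sin (by linarith [pi_pos]) (by linarith)]
  apply arccos_add_arccos_le_arccos (by positivity) (sub_nonneg.2 hsc)
  rw [cos_arccos_inv_add_add_arccos_sub (sin_sq_add_cos_sq t) hs hc]
  have : 0 ≤ (cos t - sin t) * (1 - sin t) / (sin t + cos t) :=
    div_nonneg (mul_nonneg (sub_nonneg.2 hsc) (sub_nonneg.2 (sin_le_one t))) (by positivity)
  linarith

lemma arccos_inv_sin_add_cos_add_arccos_cos_sub_sin_lt (h₀ : 0 ≤ t) (h₁ : t < π / 4) :
    arccos (1 / (sin t + cos t)) + arccos (cos t - sin t) < π / 2 + t := by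
  have hs : 0 ≤ sin t := sin_nonneg_of_nonneg_of_le_pi h₀ (by linarith [pi_pos])
  have hc : 0 ≤ cos t :=
    cos_nonneg_of_neg_pi_div_two_le_of_le (by linarith [pi_pos]) (by linarith)
  have hsc : sin t < cos t := sin_lt_cos_of_lt_pi_div_four h₀ h₁
  rw [← arccos_neg_sin (by linarith [pi_pos]) (by linarith)]
  apply arccos_add_arccos_lt_arccos (by positivity) (sub_nonneg.2 hsc.le)
    (neg_le_neg (sin_le_one t))
  rw [cos_arccos_inv_add_add_arccos_sub (sin_sq_add_cos_sq t) hs hc]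
  have : 0 < (cos t - sin t) * (1 - sin t) / (sin t + cos t) :=
    div_pos (mul_pos (sub_pos.2 hsc) (sub_pos.2 (hsc.trans_le (cos_le_one t)))) (by linarith)
  linarith

end

theorem stmt_6 (α : ℝ) (hα : α ∈ Set.Icc 0 (π / 2)) :
    f α ≤ π + α ∧ (α ∈ Set.Ioo 0 (π / 2) → f α < π + α) := by
  obtain ⟨h₀, h₁⟩ := hα
  refine ⟨?_, fun hα' => ?_⟩
  · have := arccos_inv_sin_add_cos_add_arccos_cos_sub_sin_le (t := α / 2) (by linarith)
      (by linarith)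
    unfold f
    linarith
  · have := arccos_inv_sin_add_cos_add_arccos_cos_sub_sin_lt (t := α / 2) (by linarith)
      (by linarith [hα'.2])
    unfold f
    linarith
end

section
/- For α ∈ [0, π/2], with t₁ = arccos(1/(sin(α/2)+cos(α/2))) and δt = arccos(cos(α/2)-sin(α/2)), one has cos²t₁ · cos²δt + sin²t₁ = 1/(sin(α/2)+cos(α/2))², i.e. the closing rotation angle t₂ equals t₁. -/
/-!
Write `s = sin (α/2)`, `c = cos (α/2)`. Since `0 ≤ s, c ≤ 1`, both arccos arguments lie in
`[-1, 1]`, so `cos t₁ = 1/(s + c)` and `cos δt = c - s`. The left side is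
`1 - cos² t₁ · (1 - cos² δt)`, and `1 - (c - s)² = 2sc = (s + c)² - 1`, which gives
`1 - ((s + c)² - 1)/(s + c)² = 1/(s + c)²`.
-/

open Real

namespace Real

variable {x : ℝ}

theorem one_le_sin_add_cos (hx : x ∈ Set.Icc 0 (π / 2)) : 1 ≤ sin x + cos x := by
  have hs : 0 ≤ sin x := sin_nonneg_of_nonneg_of_le_pi hx.1 (by linarith [hx.2, pi_pos])
  have hc : 0 ≤ cos x := cos_nonneg_of_mem_Icc ⟨by linarith [hx.1, pi_pos], hx.2⟩
  nlinarith [sin_sq_add_cos_sq x, sin_le_one x, cos_le_one x]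

theorem cos_arccos_inv_sin_add_cos (hx : x ∈ Set.Icc 0 (π / 2)) :
    cos (arccos (1 / (sin x + cos x))) = 1 / (sin x + cos x) := by
  have h := one_le_sin_add_cos hx
  exact cos_arccos (by linarith [one_div_pos.2 (by linarith : 0 < sin x + cos x)])
    ((div_le_one (by linarith)).2 h)

theorem cos_arccos_cos_sub_sin (hx : x ∈ Set.Icc 0 (π / 2)) :
    cos (arccos (cos x - sin x)) = cos x - sin x := by
  have hs : 0 ≤ sin x := sin_nonneg_of_nonneg_of_le_pi hx.1 (by linarith [hx.2, pi_pos])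
  have hc : 0 ≤ cos x := cos_nonneg_of_mem_Icc ⟨by linarith [hx.1, pi_pos], hx.2⟩
  exact cos_arccos (by linarith [sin_le_one x]) (by linarith [cos_le_one x])

end Real

theorem stmt_10 (α t₁ δt : ℝ) (hα : α ∈ Set.Icc 0 (π / 2))
    (ht₁ : t₁ = Real.arccos (1 / (Real.sin (α / 2) + Real.cos (α / 2))))
    (hδt : δt = Real.arccos (Real.cos (α / 2) - Real.sin (α / 2))) :
    Real.cos t₁ ^ 2 * Real.cos δt ^ 2 + Real.sin t₁ ^ 2 =
      (1 / (Real.sin (α / 2) + Real.cos (α / 2))) ^ 2 := by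
  have hx : α / 2 ∈ Set.Icc 0 (π / 2) := ⟨by linarith [hα.1], by linarith [hα.2, pi_pos]⟩
  have hsum : sin (α / 2) + cos (α / 2) ≠ 0 := by linarith [one_le_sin_add_cos hx]
  rw [sin_sq, ht₁, hδt, cos_arccos_inv_sin_add_cos hx, cos_arccos_cos_sub_sin hx]
  field_simp
  linear_combination 2 * sin_sq_add_cos_sq (α / 2)
end

section
/- For every real s, exp(s Ωz) * exp(-s Ωy) * exp(-s Ωz) = exp(-(π - s) Ωz) * exp(s Ωy) * exp((π - s) Ωz). -/
/-! The rotation `exp (±π • Oz) = diag (-1, -1, 1)` conjugates `Oy` to `-Oy`, so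
`exp (-s • Oy) = exp (-π • Oz) * exp (s • Oy) * exp (π • Oz)`. Substituting this into the left-hand
side and merging the exponentials of the commuting multiples of `Oz` gives the right-hand side. -/

open Real Matrix

noncomputable section

open NormedSpace

theorem Matrix.exp_add_smul {m : Type*} [Fintype m] [DecidableEq m] (a b : ℝ)
    (A : Matrix m m ℝ) : exp ((a + b) • A) = exp (a • A) * exp (b • A) := by
  rw [add_smul, Matrix.exp_add_of_commute _ _ (((Commute.refl A).smul_left a).smul_right b)]

/-- `ℝ³ = ℂ ⊕ ℝ`, with `ℂ` acting on the `xy`-plane by multiplication; it sends `(t * I, 0)` to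
`t • Oz`, so `exp (t • Oz)` is read off from `Complex.exp (t * I)`. -/
def complexProdRealToMatrix : ℂ × ℝ →+* Matrix (Fin 3) (Fin 3) ℝ where
  toFun p := !![p.1.re, -p.1.im, 0; p.1.im, p.1.re, 0; 0, 0, p.2]
  map_one' := by simp [Matrix.one_fin_three]
  map_mul' p q := by
    simp only [Prod.fst_mul, Prod.snd_mul, Complex.mul_re, Complex.mul_im, Matrix.mul_fin_three]
    ring_nf
  map_zero' := by ext i j; fin_cases i <;> fin_cases j <;> simp
  map_add' p q := by ext i j; fin_cases i <;> fin_cases j <;> simp [add_comm]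

theorem continuous_complexProdRealToMatrix : Continuous complexProdRealToMatrix := by
  refine continuous_matrix fun i j => ?_
  fin_cases i <;> fin_cases j <;> simp [complexProdRealToMatrix] <;> fun_prop

theorem exp_smul_Oz_s11 (t : ℝ) :
    exp (t • Oz) = !![cos t, -sin t, 0; sin t, cos t, 0; 0, 0, 1] := by
  -- `map_exp` needs a norm on the matrices; any one will do.
  let : NormedRing (Matrix (Fin 3) (Fin 3) ℝ) := Matrix.linftyOpNormedRing
  let : NormedAlgebra ℝ (Matrix (Fin 3) (Fin 3) ℝ) := Matrix.linftyOpNormedAlgebra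
  have h : t • Oz = complexProdRealToMatrix (t * Complex.I, 0) := by
    ext i j; fin_cases i <;> fin_cases j <;> simp [complexProdRealToMatrix, Oz]
  calc exp (t • Oz) = complexProdRealToMatrix (exp (t * Complex.I, 0)) :=
        h ▸ (map_exp _ continuous_complexProdRealToMatrix _).symm
    _ = _ := by simp [complexProdRealToMatrix, ← Complex.exp_eq_exp_ℂ]

theorem exp_neg_pi_smul_Oz_mul_Oy : exp ((-π) • Oz) * Oy * exp (π • Oz) = -Oy := by
  rw [exp_smul_Oz_s11, exp_smul_Oz_s11]
  ext i j; fin_cases i <;> fin_cases j <;> simp [Oy, Matrix.mul_apply, Fin.sum_univ_three]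

theorem exp_neg_smul_Oy (s : ℝ) :
    exp ((-s) • Oy) = exp ((-π) • Oz) * exp (s • Oy) * exp (π • Oz) := by
  have hinv : (exp ((-π) • Oz))⁻¹ = exp (π • Oz) := by
    rw [← Matrix.exp_neg, ← neg_smul, neg_neg]
  rw [← hinv, ← Matrix.exp_conj _ _ (Matrix.isUnit_exp _), hinv, mul_smul_comm, smul_mul_assoc,
    exp_neg_pi_smul_Oz_mul_Oy, smul_neg, neg_smul]

theorem stmt_11 (s : ℝ) :
    NormedSpace.exp (s • Oz) * NormedSpace.exp ((-s) • Oy) *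
      NormedSpace.exp ((-s) • Oz) =
    NormedSpace.exp ((-(π - s)) • Oz) * NormedSpace.exp (s • Oy) *
      NormedSpace.exp ((π - s) • Oz) := by
  have hneg : -(π - s) = s + -π := by ring
  have hpos : π - s = π + -s := by ring
  rw [exp_neg_smul_Oy, hneg, hpos, Matrix.exp_add_smul, Matrix.exp_add_smul]
  simp only [mul_assoc]
end
end

section
/- Define f(α) = 2·(arccos(1/(sin(α/2)+cos(α/2))) + arccos(cos(α/2)-sin(α/2))). Then f is strictly monotone increasing on [0, π/2]. -/
open Real

/-!
With `θ = α / 2 ∈ [0, π/4]`, both summands of `f` are increasing: `sin θ + cos θ = √2 sin (θ + π/4)`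
increases from `1` to `√2`, so its reciprocal decreases inside `[-1, 1]`, and `cos θ - sin θ`
decreases inside `[-1, 1]`; composing with the decreasing `arccos` makes each term increase.
-/

open Set

lemma sin_add_cos_eq_sqrt_two_mul_sin (θ : ℝ) : sin θ + cos θ = √2 * sin (θ + π / 4) := by
  have hsq : √2 * √2 = 2 := mul_self_sqrt zero_le_two
  rw [sin_add, cos_pi_div_four, sin_pi_div_four]
  linear_combination (-(sin θ + cos θ) / 2) * hsq

lemma strictMonoOn_sin_add_cos :
    StrictMonoOn (fun θ => sin θ + cos θ) (Icc (-(3 * π / 4)) (π / 4)) := by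
  intro x ⟨hx₀, hx₁⟩ y ⟨hy₀, hy₁⟩ hxy
  simp only [sin_add_cos_eq_sqrt_two_mul_sin]
  refine mul_lt_mul_of_pos_left ?_ (by positivity)
  exact strictMonoOn_sin ⟨by linarith, by linarith⟩ ⟨by linarith, by linarith⟩ (by linarith)

lemma strictAntiOn_cos_sub_sin :
    StrictAntiOn (fun θ => cos θ - sin θ) (Icc (-(π / 4)) (3 * π / 4)) := by
  intro x ⟨hx₀, hx₁⟩ y ⟨hy₀, hy₁⟩ hxy
  have h := strictMonoOn_sin_add_cos ⟨by linarith, by linarith⟩ ⟨by linarith, by linarith⟩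
    (neg_lt_neg hxy)
  simp only [sin_neg, cos_neg] at h
  linarith

lemma one_le_sin_add_cos {θ : ℝ} (h₀ : 0 ≤ θ) (h₁ : θ ≤ π / 2) : 1 ≤ sin θ + cos θ := by
  have hs : 0 ≤ sin θ := sin_nonneg_of_nonneg_of_le_pi h₀ (by linarith)
  have hc : 0 ≤ cos θ := cos_nonneg_of_mem_Icc ⟨by linarith, h₁⟩
  nlinarith [sin_sq_add_cos_sq θ, mul_nonneg hs hc]

lemma strictMonoOn_arccos_one_div_sin_add_cos :
    StrictMonoOn (fun θ => arccos (1 / (sin θ + cos θ))) (Icc 0 (π / 4)) := by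
  have mem : ∀ θ ∈ Icc 0 (π / 4), 1 / (sin θ + cos θ) ∈ Icc (-1) 1 := by
    intro θ ⟨h₀, h₁⟩
    have hS := one_le_sin_add_cos h₀ (by linarith)
    exact ⟨by linarith [one_div_pos.2 (by linarith : 0 < sin θ + cos θ)],
      (div_le_one (by linarith)).2 hS⟩
  intro x hx y hy hxy
  have hS := one_le_sin_add_cos hx.1 (by linarith [hx.2, pi_pos])
  have hlt := strictMonoOn_sin_add_cos ⟨by linarith [hx.1, pi_pos], hx.2⟩
    ⟨by linarith [hy.1, pi_pos], hy.2⟩ hxy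
  exact strictAntiOn_arccos (mem y hy) (mem x hx) (one_div_lt_one_div_of_lt (by linarith) hlt)

lemma strictMonoOn_arccos_cos_sub_sin :
    StrictMonoOn (fun θ => arccos (cos θ - sin θ)) (Icc 0 (π / 2)) := by
  have mem : ∀ θ ∈ Icc 0 (π / 2), cos θ - sin θ ∈ Icc (-1) 1 := by
    intro θ ⟨h₀, h₁⟩
    have hs : 0 ≤ sin θ := sin_nonneg_of_nonneg_of_le_pi h₀ (by linarith)
    have hc : 0 ≤ cos θ := cos_nonneg_of_mem_Icc ⟨by linarith, h₁⟩
    exact ⟨by linarith [sin_le_one θ], by linarith [cos_le_one θ]⟩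
  intro x hx y hy hxy
  refine strictAntiOn_arccos (mem y hy) (mem x hx) ?_
  exact strictAntiOn_cos_sub_sin ⟨by linarith [hx.1, pi_pos], by linarith [hx.2, pi_pos]⟩
    ⟨by linarith [hy.1, pi_pos], by linarith [hy.2, pi_pos]⟩ hxy

theorem stmt_18 : StrictMonoOn f (Set.Icc 0 (π / 2)) := by
  intro x ⟨hx₀, hx₁⟩ y ⟨hy₀, hy₁⟩ hxy
  have hx : x / 2 ∈ Icc 0 (π / 4) := ⟨by linarith, by linarith⟩
  have hy : y / 2 ∈ Icc 0 (π / 4) := ⟨by linarith, by linarith⟩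
  have hxy' : x / 2 < y / 2 := by linarith
  have h₁ := strictMonoOn_arccos_one_div_sin_add_cos hx hy hxy'
  have h₂ := strictMonoOn_arccos_cos_sub_sin (Icc_subset_Icc_right (by linarith [pi_pos]) hx)
    (Icc_subset_Icc_right (by linarith [pi_pos]) hy) hxy'
  simp only [f] at h₁ h₂ ⊢
  linarith
end
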